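/- Let z > 0 and let f_z be the solution of the Stein equation for Kolmogorov test functions. Then there exists an absolute constant C > 0 such that for all w with 0 ≤ w ≤ z/2, f_z'(w) ≤ C exp(-z²/4). -/

import Mathlib

/-! For `w ≤ z` the Stein equation gives `f_z'(w) = w Φ(w) (1 - Φ(z)) / φ(w) + (1 - Φ(z))`.
By the Mills-ratio bound `z (1 - Φ(z)) ≤ φ(z)`, together with `Φ(w) ≤ 1` and `w ≤ z`, the first
summand is at most `φ(z) / φ(w) = exp ((w² - z²) / 2) ≤ exp (-z²/4)` when `w ≤ z/2`. For the
second, `exp (-t²/2) ≤ exp (-z²/4) exp (-t²/4)` when `t ≥ z ≥ 0`, so `1 - Φ(z) ≤ √2 exp (-z²/4)`.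
-/

open MeasureTheory Real

/-- The standard normal cumulative distribution function. -/
noncomputable def stdGaussCDF (z : ℝ) : ℝ :=
  ∫ t in Set.Iic z, Real.exp (-t ^ 2 / 2) / Real.sqrt (2 * Real.pi)

/-- The standard normal density. -/
noncomputable def stdGaussPDF (w : ℝ) : ℝ :=
  Real.exp (-w ^ 2 / 2) / Real.sqrt (2 * Real.pi)

/-- The solution of the Stein equation for the Kolmogorov test function `1_{· ≤ z}`. -/
noncomputable def steinSol (z w : ℝ) : ℝ :=
  if w ≤ z then stdGaussCDF w * (1 - stdGaussCDF z) / stdGaussPDF w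
  else stdGaussCDF z * (1 - stdGaussCDF w) / stdGaussPDF w

/-- The derivative of the Stein solution, defined via the Stein equation
`f_z'(w) = w f_z(w) + 1_{w ≤ z} - Φ(z)`. -/
noncomputable def steinSol' (z w : ℝ) : ℝ :=
  w * steinSol z w + (if w ≤ z then 1 else 0) - stdGaussCDF z

open Set

lemma stdGaussPDF_pos (w : ℝ) : 0 < stdGaussPDF w := by
  unfold stdGaussPDF; positivity

lemma stdGaussPDF_div_stdGaussPDF (a b : ℝ) :
    stdGaussPDF a / stdGaussPDF b = exp ((b ^ 2 - a ^ 2) / 2) := by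
  rw [stdGaussPDF, stdGaussPDF, div_div_div_cancel_right₀ (by positivity), ← exp_sub]
  ring_nf

lemma integral_exp_neg_sq_div (c : ℝ) : ∫ t : ℝ, exp (-t ^ 2 / c) = √(c * π) := by
  have := integral_gaussian c⁻¹
  simp only [div_inv_eq_mul, neg_mul, ← div_eq_inv_mul] at this
  rw [mul_comm] at this
  simpa only [neg_div] using this

lemma integrable_exp_neg_sq_div {c : ℝ} (hc : 0 < c) : Integrable fun t : ℝ ↦ exp (-t ^ 2 / c) := by
  simpa only [div_eq_inv_mul, mul_neg, neg_mul] using integrable_exp_neg_mul_sq (inv_pos.2 hc)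

lemma integrable_stdGaussPDF : Integrable stdGaussPDF :=
  (integrable_exp_neg_sq_div two_pos).div_const _

lemma integral_stdGaussPDF : ∫ t, stdGaussPDF t = 1 := by
  unfold stdGaussPDF
  rw [integral_div, integral_exp_neg_sq_div, div_self (by positivity)]

lemma one_sub_stdGaussCDF (z : ℝ) : 1 - stdGaussCDF z = ∫ t in Ioi z, stdGaussPDF t := by
  rw [← integral_stdGaussPDF, ← intervalIntegral.integral_Iic_add_Ioi (b := z)
    integrable_stdGaussPDF.integrableOn integrable_stdGaussPDF.integrableOn, stdGaussCDF]
  simp only [stdGaussPDF, add_sub_cancel_left]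

lemma stdGaussCDF_le_one (z : ℝ) : stdGaussCDF z ≤ 1 := by
  have : 0 ≤ ∫ t in Ioi z, stdGaussPDF t :=
    setIntegral_nonneg measurableSet_Ioi fun t _ ↦ (stdGaussPDF_pos t).le
  linarith [one_sub_stdGaussCDF z]

lemma mul_one_sub_stdGaussCDF_le_stdGaussPDF {z : ℝ} (hz : 0 ≤ z) :
    z * (1 - stdGaussCDF z) ≤ stdGaussPDF z := by
  rcases hz.eq_or_lt with rfl | hz
  · simpa using (stdGaussPDF_pos 0).le
  have hdom : ∀ t ∈ Ioi z, stdGaussPDF t ≤ stdGaussPDF z * exp (z ^ 2) * exp (-z * t) := by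
    intro t _
    rw [stdGaussPDF, stdGaussPDF, div_mul_eq_mul_div, div_mul_eq_mul_div, ← exp_add, ← exp_add]
    gcongr
    nlinarith [sq_nonneg (t - z)]
  have hint : IntegrableOn (fun t ↦ stdGaussPDF z * exp (z ^ 2) * exp (-z * t)) (Ioi z) :=
    (integrableOn_exp_mul_Ioi (neg_lt_zero.2 hz) z).const_mul _
  rw [one_sub_stdGaussCDF]
  calc z * ∫ t in Ioi z, stdGaussPDF t
      ≤ z * ∫ t in Ioi z, stdGaussPDF z * exp (z ^ 2) * exp (-z * t) :=
        mul_le_mul_of_nonneg_left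
          (setIntegral_mono_on integrable_stdGaussPDF.integrableOn hint measurableSet_Ioi hdom) hz.le
    _ = stdGaussPDF z := by
        rw [integral_const_mul, integral_exp_mul_Ioi (neg_lt_zero.2 hz), neg_div_neg_eq,
          mul_assoc, ← mul_div_assoc, ← exp_add, show z ^ 2 + -z * z = 0 by ring, exp_zero]
        field_simp

lemma one_sub_stdGaussCDF_le_sqrt_two_mul_exp {z : ℝ} (hz : 0 ≤ z) :
    1 - stdGaussCDF z ≤ √2 * exp (-z ^ 2 / 4) := by
  set c := exp (-z ^ 2 / 4) / √(2 * π)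
  have hdom : ∀ t ∈ Ioi z, stdGaussPDF t ≤ c * exp (-t ^ 2 / 4) := by
    intro t ht
    have hzt : z ^ 2 ≤ t ^ 2 := pow_le_pow_left₀ hz (le_of_lt ht) 2
    rw [stdGaussPDF, div_mul_eq_mul_div, ← exp_add]
    gcongr
    linarith
  have hint : Integrable fun t : ℝ ↦ c * exp (-t ^ 2 / 4) :=
    (integrable_exp_neg_sq_div four_pos).const_mul c
  rw [one_sub_stdGaussCDF]
  calc ∫ t in Ioi z, stdGaussPDF t
      ≤ ∫ t in Ioi z, c * exp (-t ^ 2 / 4) :=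
        setIntegral_mono_on integrable_stdGaussPDF.integrableOn hint.integrableOn
          measurableSet_Ioi hdom
    _ ≤ ∫ t, c * exp (-t ^ 2 / 4) :=
        setIntegral_le_integral hint (.of_forall fun t ↦ by positivity)
    _ = √2 * exp (-z ^ 2 / 4) := by
        rw [integral_const_mul, integral_exp_neg_sq_div, show (4 : ℝ) * π = 2 * (2 * π) by ring,
          sqrt_mul zero_le_two]
        simp only [c]
        field_simp

lemma steinSol'_of_le {z w : ℝ} (h : w ≤ z) :
    steinSol' z w =
      w * stdGaussCDF w * (1 - stdGaussCDF z) / stdGaussPDF w + (1 - stdGaussCDF z) := by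
  rw [steinSol', steinSol, if_pos h, if_pos h]
  ring

theorem stmt_6 :
    ∃ C > (0 : ℝ), ∀ z : ℝ, 0 < z → ∀ w : ℝ, 0 ≤ w → w ≤ z / 2 →
      steinSol' z w ≤ C * Real.exp (-z ^ 2 / 4) := by
  refine ⟨1 + √2, by positivity, fun z hz w hw hwz ↦ ?_⟩
  have hwz' : w ≤ z := by linarith
  have htail_nonneg : 0 ≤ 1 - stdGaussCDF z := sub_nonneg.2 (stdGaussCDF_le_one z)
  have hpdf := stdGaussPDF_pos w
  have hsummand : w * stdGaussCDF w * (1 - stdGaussCDF z) / stdGaussPDF w ≤ exp (-z ^ 2 / 4) :=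
    calc w * stdGaussCDF w * (1 - stdGaussCDF z) / stdGaussPDF w
        ≤ w * 1 * (1 - stdGaussCDF z) / stdGaussPDF w := by
          gcongr
          exact stdGaussCDF_le_one w
      _ ≤ z * (1 - stdGaussCDF z) / stdGaussPDF w := by
          rw [mul_one]; gcongr
      _ ≤ stdGaussPDF z / stdGaussPDF w := by
          gcongr
          exact mul_one_sub_stdGaussCDF_le_stdGaussPDF hz.le
      _ = exp ((w ^ 2 - z ^ 2) / 2) := stdGaussPDF_div_stdGaussPDF z w
      _ ≤ exp (-z ^ 2 / 4) := exp_le_exp.2 (by nlinarith)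
  rw [steinSol'_of_le hwz', add_mul, one_mul]
  linarith [one_sub_stdGaussCDF_le_sqrt_two_mul_exp hz.le]
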